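/- arXiv:1608.00953 — 5 statements merged into one kernel-verified Lean document; each statement's English description precedes it below -/
import Mathlib

section
/- Suppose s < 1, m + s > 1, k > -1, and 0 ≤ x < 1. Then ∫_0^1 (1-y)^{-s} (1-xy)^{-m} y^k dy ≤ C(1-x)^{1-s-m} for a finite constant C depending only on s, m, k. -/
/-!
Near `y = 0` only the factor `y ^ k` is singular. Near `y = 1` one uses
`2 (1 - x y) ≥ (1 - x) + (1 - y)`, which after `t = 1 - y` bounds the integrand by a multiple of
`t ^ (-s) * (a + t) ^ (-m)` with `a = 1 - x`. The scaling `t = a u` shows that the integral of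
the latter over `(0, ∞)` is `a ^ (1 - s - m)` times the finite constant
`∫ u in Ioi 0, u ^ (-s) * (1 + u) ^ (-m)`.
-/

open MeasureTheory Set

lemma Real.rpow_le_two_rpow_abs {a p : ℝ} (h1 : 1 / 2 ≤ a) (h2 : a ≤ 1) :
    a ^ p ≤ 2 ^ |p| := by
  have ha : 0 < a := by linarith
  rw [Real.rpow_def_of_pos ha, Real.rpow_def_of_pos two_pos]
  apply Real.exp_le_exp.2
  have hlog : |Real.log a| ≤ Real.log 2 := by
    rw [abs_of_nonpos (Real.log_nonpos ha.le h2), ← Real.log_inv]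
    exact Real.log_le_log (by positivity) ((inv_le_comm₀ ha two_pos).2 (by linarith))
  calc Real.log a * p ≤ |Real.log a| * |p| := by rw [← abs_mul]; exact le_abs_self _
    _ ≤ Real.log 2 * |p| := by gcongr

lemma intervalIntegral.integral_mono_on_Ioo_of_nonneg {f g : ℝ → ℝ} {a b : ℝ} (hab : a ≤ b)
    (hg : IntervalIntegrable g volume a b) (hf : ∀ x ∈ Ioo a b, 0 ≤ f x)
    (hfg : ∀ x ∈ Ioo a b, f x ≤ g x) :
    ∫ x in a..b, f x ≤ ∫ x in a..b, g x := by
  rw [intervalIntegral.integral_of_le hab, intervalIntegral.integral_of_le hab,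
    integral_Ioc_eq_integral_Ioo, integral_Ioc_eq_integral_Ioo]
  exact integral_mono_of_nonneg (ae_restrict_of_forall_mem measurableSet_Ioo hf)
    (hg.1.mono_set Ioo_subset_Ioc_self) (ae_restrict_of_forall_mem measurableSet_Ioo hfg)

section ScaledKernel

variable {s m a : ℝ}

lemma integrableOn_Ioi_rpow_mul_add_rpow (hs : s < 1) (hms : 1 < m + s) (ha : 0 < a) :
    IntegrableOn (fun t : ℝ => t ^ (-s) * (a + t) ^ (-m)) (Ioi 0) := by
  have hm : -m ≤ 0 := by linarith
  have hmeas : AEStronglyMeasurable (fun t : ℝ => t ^ (-s) * (a + t) ^ (-m)) volume :=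
    (by fun_prop : Measurable fun t : ℝ => t ^ (-s) * (a + t) ^ (-m)).aestronglyMeasurable
  rw [← Ioc_union_Ioi_eq_Ioi zero_le_one]
  refine IntegrableOn.union ?_ ?_
  · have hdom : IntegrableOn (fun t : ℝ => t ^ (-s) * a ^ (-m)) (Ioc 0 1) :=
      ((intervalIntegrable_iff_integrableOn_Ioc_of_le zero_le_one).1
        (intervalIntegral.intervalIntegrable_rpow' (by linarith))).mul_const _
    refine hdom.mono' hmeas.restrict (ae_restrict_of_forall_mem measurableSet_Ioc ?_)
    rintro t ⟨ht, -⟩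
    rw [Real.norm_of_nonneg (by positivity)]
    exact mul_le_mul_of_nonneg_left (Real.rpow_le_rpow_of_nonpos ha (by linarith) hm)
      (by positivity)
  · have hdom : IntegrableOn (fun t : ℝ => t ^ (-s - m)) (Ioi 1) :=
      integrableOn_Ioi_rpow_of_lt (by linarith) one_pos
    refine hdom.mono' hmeas.restrict (ae_restrict_of_forall_mem measurableSet_Ioi ?_)
    intro t ht
    have ht : (0 : ℝ) < t := zero_lt_one.trans ht
    rw [Real.norm_of_nonneg (by positivity), sub_eq_add_neg, Real.rpow_add ht]
    exact mul_le_mul_of_nonneg_left (Real.rpow_le_rpow_of_nonpos ht (by linarith) hm)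
      (by positivity)

lemma integral_Ioi_rpow_mul_add_rpow (ha : 0 < a) :
    ∫ t in Ioi 0, t ^ (-s) * (a + t) ^ (-m)
      = a ^ (1 - s - m) * ∫ u in Ioi 0, u ^ (-s) * (1 + u) ^ (-m) := by
  have hscale := integral_comp_mul_left_Ioi (fun u : ℝ => u ^ (-s) * (1 + u) ^ (-m)) 0
    (inv_pos.2 ha)
  rw [mul_zero, smul_eq_mul, inv_inv] at hscale
  calc ∫ t in Ioi 0, t ^ (-s) * (a + t) ^ (-m)
      = ∫ t in Ioi 0, a ^ (-s - m) * ((a⁻¹ * t) ^ (-s) * (1 + a⁻¹ * t) ^ (-m)) := by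
        refine setIntegral_congr_fun measurableSet_Ioi fun t (ht : 0 < t) => ?_
        have hsum : a + t = a * (1 + a⁻¹ * t) := by field_simp
        rw [hsum, Real.mul_rpow ha.le (by positivity), Real.mul_rpow (by positivity) ht.le,
          Real.inv_rpow ha.le, sub_eq_add_neg, Real.rpow_add ha, Real.rpow_neg ha.le]
        field_simp
    _ = a ^ (1 - s - m) * ∫ u in Ioi 0, u ^ (-s) * (1 + u) ^ (-m) := by
        rw [integral_const_mul, hscale, ← mul_assoc, show 1 - s - m = (-s - m) + 1 by ring,
          Real.rpow_add_one ha.ne']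

lemma intervalIntegrable_rpow_mul_add_rpow (hs : s < 1) (hms : 1 < m + s) (ha : 0 < a) :
    IntervalIntegrable (fun t : ℝ => t ^ (-s) * (a + t) ^ (-m)) volume 0 1 :=
  (intervalIntegrable_iff_integrableOn_Ioc_of_le zero_le_one).2
    ((integrableOn_Ioi_rpow_mul_add_rpow hs hms ha).mono_set Ioc_subset_Ioi_self)

lemma intervalIntegral_rpow_mul_add_rpow_le (hs : s < 1) (hms : 1 < m + s) (ha : 0 < a) :
    ∫ t in (0 : ℝ)..1, t ^ (-s) * (a + t) ^ (-m)
      ≤ a ^ (1 - s - m) * ∫ u in Ioi 0, u ^ (-s) * (1 + u) ^ (-m) := by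
  rw [← integral_Ioi_rpow_mul_add_rpow ha, intervalIntegral.integral_of_le zero_le_one]
  exact setIntegral_mono_set (integrableOn_Ioi_rpow_mul_add_rpow hs hms ha)
    (ae_restrict_of_forall_mem measurableSet_Ioi fun t (ht : 0 < t) => by positivity)
    Ioc_subset_Ioi_self.eventuallyLE

end ScaledKernel

lemma two_mul_one_sub_mul_ge {x y : ℝ} (hx0 : 0 ≤ x) (hx1 : x ≤ 1) (hy0 : 0 ≤ y) (hy1 : y ≤ 1) :
    (1 - x) + (1 - y) ≤ 2 * (1 - x * y) := by
  nlinarith [mul_nonneg hx0 (sub_nonneg.2 hy1), mul_nonneg hy0 (sub_nonneg.2 hx1)]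

lemma euler_integrand_le {s m k x y : ℝ} (hm : 0 ≤ m) (hx0 : 0 ≤ x) (hx1 : x ≤ 1)
    (hy0 : 0 < y) (hy1 : y < 1) :
    (1 - y) ^ (-s) * (1 - x * y) ^ (-m) * y ^ k
      ≤ 2 ^ |s| * 2 ^ m * y ^ k
        + 2 ^ |k| * 2 ^ m * ((1 - y) ^ (-s) * ((1 - x) + (1 - y)) ^ (-m)) := by
  have hxy : x * y ≤ y := mul_le_of_le_one_left hy0.le hx1
  have hxy0 : 0 ≤ x * y := mul_nonneg hx0 hy0.le
  rcases le_total y (1 / 2) with hy | hy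
  · have h1 : (1 - y) ^ (-s) ≤ 2 ^ |s| := by
      simpa using Real.rpow_le_two_rpow_abs (p := -s) (by linarith) (by linarith)
    have h2 : (1 - x * y) ^ (-m) ≤ 2 ^ m := by
      simpa [abs_of_nonneg hm] using
        Real.rpow_le_two_rpow_abs (p := -m) (a := 1 - x * y) (by linarith) (by linarith)
    have h3 : 0 ≤ 2 ^ |k| * 2 ^ m * ((1 - y) ^ (-s) * ((1 - x) + (1 - y)) ^ (-m)) := by
      have : 0 < 1 - y := by linarith
      have : 0 ≤ 1 - x := by linarith
      positivity
    have h4 : (1 - y) ^ (-s) * (1 - x * y) ^ (-m) * y ^ k ≤ 2 ^ |s| * 2 ^ m * y ^ k := by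
      have : 0 < 1 - x * y := by linarith
      gcongr
    linarith
  · have hsum : 0 < (1 - x) + (1 - y) := by linarith
    have h1 : (1 - x * y) ^ (-m) ≤ 2 ^ m * ((1 - x) + (1 - y)) ^ (-m) := by
      calc (1 - x * y) ^ (-m) ≤ (((1 - x) + (1 - y)) / 2) ^ (-m) :=
            Real.rpow_le_rpow_of_nonpos (by positivity)
              (by linarith [two_mul_one_sub_mul_ge hx0 hx1 hy0.le hy1.le]) (by linarith)
        _ = 2 ^ m * ((1 - x) + (1 - y)) ^ (-m) := by
            rw [Real.div_rpow hsum.le zero_le_two, Real.rpow_neg zero_le_two]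
            field_simp
    have h2 : y ^ k ≤ 2 ^ |k| := Real.rpow_le_two_rpow_abs hy hy1.le
    have h3 : 0 ≤ 2 ^ |s| * 2 ^ m * y ^ k := by positivity
    have h4 : (1 - y) ^ (-s) * (1 - x * y) ^ (-m) * y ^ k
        ≤ 2 ^ |k| * 2 ^ m * ((1 - y) ^ (-s) * ((1 - x) + (1 - y)) ^ (-m)) := by
      have : 0 < 1 - y := by linarith
      calc (1 - y) ^ (-s) * (1 - x * y) ^ (-m) * y ^ k
          ≤ (1 - y) ^ (-s) * (2 ^ m * ((1 - x) + (1 - y)) ^ (-m)) * 2 ^ |k| := by gcongr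
        _ = _ := by ring
    linarith

lemma euler_integrand_nonneg {s m k x y : ℝ} (hx0 : 0 ≤ x) (hx1 : x ≤ 1) (hy0 : 0 ≤ y)
    (hy1 : y ≤ 1) :
    0 ≤ (1 - y) ^ (-s) * (1 - x * y) ^ (-m) * y ^ k :=
  mul_nonneg (mul_nonneg (Real.rpow_nonneg (by linarith) _) (Real.rpow_nonneg (by nlinarith) _))
    (Real.rpow_nonneg hy0 _)

lemma integral_euler_integrand_le {s m k x : ℝ} (hs : s < 1) (hms : 1 < m + s) (hk : -1 < k)
    (hx0 : 0 ≤ x) (hx1 : x < 1) :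
    ∫ y in (0 : ℝ)..1, (1 - y) ^ (-s) * (1 - x * y) ^ (-m) * y ^ k
      ≤ 2 ^ |s| * 2 ^ m / (k + 1)
        + 2 ^ |k| * 2 ^ m * ((1 - x) ^ (1 - s - m) * ∫ u in Ioi 0, u ^ (-s) * (1 + u) ^ (-m)) := by
  have ha : 0 < 1 - x := by linarith
  have hyk : IntervalIntegrable (fun y : ℝ => 2 ^ |s| * 2 ^ m * y ^ k) volume 0 1 :=
    (intervalIntegral.intervalIntegrable_rpow' hk).const_mul _
  have hkernel : IntervalIntegrable
      (fun y : ℝ => 2 ^ |k| * 2 ^ m * ((1 - y) ^ (-s) * ((1 - x) + (1 - y)) ^ (-m))) volume 0 1 := by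
    simpa using ((intervalIntegrable_rpow_mul_add_rpow hs hms ha).comp_sub_left 1).symm.const_mul
      (2 ^ |k| * 2 ^ m)
  calc ∫ y in (0 : ℝ)..1, (1 - y) ^ (-s) * (1 - x * y) ^ (-m) * y ^ k
      ≤ ∫ y in (0 : ℝ)..1, (2 ^ |s| * 2 ^ m * y ^ k
          + 2 ^ |k| * 2 ^ m * ((1 - y) ^ (-s) * ((1 - x) + (1 - y)) ^ (-m))) :=
        intervalIntegral.integral_mono_on_Ioo_of_nonneg zero_le_one (hyk.add hkernel)
          (fun y hy => euler_integrand_nonneg hx0 hx1.le hy.1.le hy.2.le)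
          (fun y hy => euler_integrand_le (by linarith) hx0 hx1.le hy.1 hy.2)
    _ = 2 ^ |s| * 2 ^ m / (k + 1)
          + 2 ^ |k| * 2 ^ m * ∫ t in (0 : ℝ)..1, t ^ (-s) * ((1 - x) + t) ^ (-m) := by
        rw [intervalIntegral.integral_add hyk hkernel, intervalIntegral.integral_const_mul,
          intervalIntegral.integral_const_mul, integral_rpow (Or.inl hk),
          intervalIntegral.integral_comp_sub_left (fun t => t ^ (-s) * ((1 - x) + t) ^ (-m)) 1]
        simp [Real.zero_rpow (by linarith : k + 1 ≠ 0), div_eq_mul_inv]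
    _ ≤ _ := by
        gcongr
        exact intervalIntegral_rpow_mul_add_rpow_le hs hms ha

theorem stmt_6 (s m k : ℝ) (hs : s < 1) (hms : 1 < m + s) (hk : -1 < k) :
    ∃ C : ℝ, 0 < C ∧ ∀ x : ℝ, 0 ≤ x → x < 1 →
      ∫ y in (0:ℝ)..1, (1 - y) ^ (-s) * (1 - x * y) ^ (-m) * y ^ k
        ≤ C * (1 - x) ^ (1 - s - m) := by
  set I := ∫ u in Ioi (0 : ℝ), u ^ (-s) * (1 + u) ^ (-m)
  have hI : 0 ≤ I := setIntegral_nonneg measurableSet_Ioi fun u (hu : 0 < u) => by positivity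
  have hA : 0 < 2 ^ |s| * 2 ^ m / (k + 1) := by
    have : 0 < k + 1 := by linarith
    positivity
  refine ⟨2 ^ |s| * 2 ^ m / (k + 1) + 2 ^ |k| * 2 ^ m * I, by positivity, fun x hx0 hx1 => ?_⟩
  have hpow : 1 ≤ (1 - x) ^ (1 - s - m) :=
    Real.one_le_rpow_of_pos_of_le_one_of_nonpos (by linarith) (by linarith) (by linarith)
  calc _ ≤ 2 ^ |s| * 2 ^ m / (k + 1) + 2 ^ |k| * 2 ^ m * ((1 - x) ^ (1 - s - m) * I) :=
        integral_euler_integrand_le hs hms hk hx0 hx1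
    _ ≤ (2 ^ |s| * 2 ^ m / (k + 1) + 2 ^ |k| * 2 ^ m * I) * (1 - x) ^ (1 - s - m) := by
        nlinarith
end

section
/- Suppose s < 1, m + s > 1, k > -1, 2 + k > s + m, and 2 + k > s. Then for all 0 ≤ x < 1, ∫_0^1 (1-y)^{-s}(1-xy)^{-m} y^k dy ≤ (Γ(s+m-1)Γ(1-s)/Γ(m)) · (1-x)^{1-s-m}. -/
/-!
On `(0, 1)` we have `y ^ k ≤ y ^ (s + m - 2)` because `k > s + m - 2`. For the larger integrand
the exponents `-s`, `-m`, `s + m - 2` of `1 - y`, `1 - x y`, `y` sum to `-2`, and this is exactly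
the case in which the involution `y = (1 - u) / (1 - x u)` of `(0, 1)` turns the integral into
`(1 - x) ^ (1 - s - m) * B(1 - s, s + m - 1)`,
where `B(1 - s, s + m - 1) = Γ(1 - s) Γ(s + m - 1) / Γ(m)`.
-/

open MeasureTheory Set Real

section Beta

variable {a b : ℝ}

lemma ofReal_rpow_mul_one_sub_rpow {u : ℝ} (hu : u ∈ Ioc (0 : ℝ) 1) :
    ((u ^ (a - 1) * (1 - u) ^ (b - 1) : ℝ) : ℂ)
      = (u : ℂ) ^ ((a : ℂ) - 1) * (1 - (u : ℂ)) ^ ((b : ℂ) - 1) := by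
  push_cast [Complex.ofReal_cpow hu.1.le, Complex.ofReal_cpow (sub_nonneg.2 hu.2)]
  rfl

lemma integrableOn_rpow_mul_one_sub_rpow (ha : 0 < a) (hb : 0 < b) :
    IntegrableOn (fun u : ℝ ↦ u ^ (a - 1) * (1 - u) ^ (b - 1)) (Ioo 0 1) := by
  have h := Complex.betaIntegral_convergent (u := a) (v := b) (by simpa) (by simpa)
  rw [intervalIntegrable_iff_integrableOn_Ioc_of_le zero_le_one] at h
  have h' : IntegrableOn (fun u : ℝ ↦ RCLike.re ((u ^ (a - 1) * (1 - u) ^ (b - 1) : ℝ) : ℂ))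
      (Ioc 0 1) :=
    (h.congr_fun (fun u hu ↦ (ofReal_rpow_mul_one_sub_rpow hu).symm) measurableSet_Ioc).re
  exact (h'.congr_fun (fun u _ ↦ Complex.ofReal_re _) measurableSet_Ioc).mono_set
    Ioo_subset_Ioc_self

lemma integral_rpow_mul_one_sub_rpow (ha : 0 < a) (hb : 0 < b) :
    ∫ u in Ioo (0 : ℝ) 1, u ^ (a - 1) * (1 - u) ^ (b - 1)
      = Gamma a * Gamma b / Gamma (a + b) := by
  have h := Complex.betaIntegral_eq_Gamma_mul_div a b (by simpa) (by simpa)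
  rw [Complex.betaIntegral, intervalIntegral.integral_of_le zero_le_one,
    ← setIntegral_congr_fun measurableSet_Ioc (fun u hu ↦ ofReal_rpow_mul_one_sub_rpow hu),
    integral_complex_ofReal, integral_Ioc_eq_integral_Ioo, ← Complex.ofReal_add,
    Complex.Gamma_ofReal, Complex.Gamma_ofReal, Complex.Gamma_ofReal] at h
  exact_mod_cast h

end Beta

section MoebiusFlip

noncomputable def moebiusFlip (x u : ℝ) : ℝ := (1 - u) / (1 - x * u)

variable {x u : ℝ}

lemma one_sub_mul_pos (hx : x < 1) (hu : u ∈ Icc (0 : ℝ) 1) : 0 < 1 - x * u := by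
  rcases le_total 0 x with h | h <;> nlinarith [hu.1, hu.2]

lemma one_sub_moebiusFlip (hD : 1 - x * u ≠ 0) :
    1 - moebiusFlip x u = u * (1 - x) / (1 - x * u) := by
  rw [moebiusFlip, one_sub_div hD]
  ring

lemma one_sub_mul_moebiusFlip (hD : 1 - x * u ≠ 0) :
    1 - x * moebiusFlip x u = (1 - x) / (1 - x * u) := by
  rw [moebiusFlip, ← mul_div_assoc, one_sub_div hD]
  ring

lemma moebiusFlip_moebiusFlip (hx : x ≠ 1) (hD : 1 - x * u ≠ 0) :
    moebiusFlip x (moebiusFlip x u) = u := by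
  rw [moebiusFlip, one_sub_moebiusFlip hD, one_sub_mul_moebiusFlip hD,
    div_div_div_cancel_right₀ hD, mul_div_cancel_right₀ u (sub_ne_zero.2 hx.symm)]

lemma moebiusFlip_mem_Ioo (hx : x < 1) (hu : u ∈ Ioo (0 : ℝ) 1) :
    moebiusFlip x u ∈ Ioo 0 1 := by
  have hD := one_sub_mul_pos hx (Ioo_subset_Icc_self hu)
  refine ⟨div_pos (sub_pos.2 hu.2) hD, (div_lt_one hD).2 ?_⟩
  nlinarith [hu.1]

lemma hasDerivAt_moebiusFlip (hD : 1 - x * u ≠ 0) :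
    HasDerivAt (moebiusFlip x) ((x - 1) / (1 - x * u) ^ 2) u := by
  refine (((hasDerivAt_id' u).const_sub 1).div
    (((hasDerivAt_id' u).const_mul x).const_sub 1) hD).congr_deriv ?_
  ring

lemma hasDerivWithinAt_moebiusFlip_Ioo (hx : x < 1) (hu : u ∈ Ioo (0 : ℝ) 1) :
    HasDerivWithinAt (moebiusFlip x) ((x - 1) / (1 - x * u) ^ 2) (Ioo 0 1) u :=
  (hasDerivAt_moebiusFlip (one_sub_mul_pos hx (Ioo_subset_Icc_self hu)).ne').hasDerivWithinAt

lemma image_moebiusFlip_Ioo (hx : x < 1) : moebiusFlip x '' Ioo 0 1 = Ioo 0 1 := by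
  refine (mapsTo_iff_image_subset.1 fun u hu ↦ moebiusFlip_mem_Ioo hx hu).antisymm fun u hu ↦ ?_
  exact ⟨moebiusFlip x u, moebiusFlip_mem_Ioo hx hu,
    moebiusFlip_moebiusFlip hx.ne (one_sub_mul_pos hx (Ioo_subset_Icc_self hu)).ne'⟩

lemma injOn_moebiusFlip (hx : x < 1) : InjOn (moebiusFlip x) (Ioo 0 1) := by
  intro u hu v hv huv
  rw [← moebiusFlip_moebiusFlip hx.ne (one_sub_mul_pos hx (Ioo_subset_Icc_self hu)).ne',
    huv, moebiusFlip_moebiusFlip hx.ne (one_sub_mul_pos hx (Ioo_subset_Icc_self hv)).ne']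

end MoebiusFlip

section EulerKernel

variable {a b c x u : ℝ}

lemma abs_deriv_mul_kernel_moebiusFlip (habc : a + b + c = -2) (hx : x < 1)
    (hu : u ∈ Ioo (0 : ℝ) 1) :
    |(x - 1) / (1 - x * u) ^ 2| *
        ((1 - moebiusFlip x u) ^ a * (1 - x * moebiusFlip x u) ^ b * moebiusFlip x u ^ c)
      = (1 - x) ^ (a + b + 1) * (u ^ a * (1 - u) ^ c) := by
  have hx' : 0 < 1 - x := sub_pos.2 hx
  have hD := one_sub_mul_pos hx (Ioo_subset_Icc_self hu)
  have hu1 : 0 < 1 - u := sub_pos.2 hu.2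
  have hDpow : (1 - x * u) ^ 2 * ((1 - x * u) ^ a * (1 - x * u) ^ b * (1 - x * u) ^ c) = 1 := by
    rw [← rpow_add hD, ← rpow_add hD, habc, rpow_neg hD.le, rpow_two,
      mul_inv_cancel₀ (by positivity)]
  rw [one_sub_moebiusFlip hD.ne', one_sub_mul_moebiusFlip hD.ne', moebiusFlip,
    abs_div, abs_of_neg (sub_neg.2 hx), abs_of_pos (by positivity),
    div_rpow (mul_pos hu.1 hx').le hD.le, div_rpow hx'.le hD.le, div_rpow hu1.le hD.le,
    mul_rpow hu.1.le hx'.le, rpow_add hx', rpow_add hx', rpow_one]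
  field_simp
  linear_combination (-(1 - x) * u ^ a) * hDpow

theorem integrableOn_one_sub_rpow_mul_one_sub_mul_rpow_mul_rpow (habc : a + b + c = -2)
    (hx : x < 1) (h : IntegrableOn (fun u : ℝ ↦ u ^ a * (1 - u) ^ c) (Ioo 0 1)) :
    IntegrableOn (fun y : ℝ ↦ (1 - y) ^ a * (1 - x * y) ^ b * y ^ c) (Ioo 0 1) := by
  rw [← image_moebiusFlip_Ioo hx, integrableOn_image_iff_integrableOn_abs_deriv_smul
    measurableSet_Ioo (fun _ ↦ hasDerivWithinAt_moebiusFlip_Ioo hx) (injOn_moebiusFlip hx)]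
  exact IntegrableOn.congr_fun (h.const_mul _)
    (fun u hu ↦ (abs_deriv_mul_kernel_moebiusFlip habc hx hu).symm) measurableSet_Ioo

theorem setIntegral_one_sub_rpow_mul_one_sub_mul_rpow_mul_rpow (habc : a + b + c = -2)
    (hx : x < 1) :
    ∫ y in Ioo (0 : ℝ) 1, (1 - y) ^ a * (1 - x * y) ^ b * y ^ c
      = (1 - x) ^ (a + b + 1) * ∫ u in Ioo (0 : ℝ) 1, u ^ a * (1 - u) ^ c := by
  conv_lhs => rw [← image_moebiusFlip_Ioo hx]
  rw [integral_image_eq_integral_abs_deriv_smul measurableSet_Ioo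
    (fun _ ↦ hasDerivWithinAt_moebiusFlip_Ioo hx) (injOn_moebiusFlip hx),
    ← integral_const_mul]
  exact setIntegral_congr_fun measurableSet_Ioo
    (fun u hu ↦ abs_deriv_mul_kernel_moebiusFlip habc hx hu)

end EulerKernel

theorem stmt_7_general (s m k : ℝ) (hs : s < 1) (hms : 1 < m + s)
    (h1 : s + m < 2 + k) :
    ∀ x : ℝ, 0 ≤ x → x < 1 →
      ∫ y in (0:ℝ)..1, (1 - y) ^ (-s) * (1 - x * y) ^ (-m) * y ^ k
        ≤ (Real.Gamma (s + m - 1) * Real.Gamma (1 - s) / Real.Gamma m) *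
            (1 - x) ^ (1 - s - m) := by
  intro x _ hx
  have habc : -s + -m + (s + m - 2) = -2 := by ring
  have hbeta := integrableOn_rpow_mul_one_sub_rpow (a := 1 - s) (b := s + m - 1)
    (by linarith) (by linarith)
  have hbeta_val := integral_rpow_mul_one_sub_rpow (a := 1 - s) (b := s + m - 1)
    (by linarith) (by linarith)
  rw [show 1 - s - 1 = -s by ring, show s + m - 1 - 1 = s + m - 2 by ring] at hbeta hbeta_val
  rw [show 1 - s + (s + m - 1) = m by ring] at hbeta_val
  have hpos : ∀ y ∈ Ioo (0 : ℝ) 1, 0 < (1 - y) ^ (-s) * (1 - x * y) ^ (-m) := fun y hy ↦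
    mul_pos (rpow_pos_of_pos (sub_pos.2 hy.2) _)
      (rpow_pos_of_pos (one_sub_mul_pos hx (Ioo_subset_Icc_self hy)) _)
  rw [intervalIntegral.integral_of_le zero_le_one, integral_Ioc_eq_integral_Ioo]
  calc ∫ y in Ioo (0 : ℝ) 1, (1 - y) ^ (-s) * (1 - x * y) ^ (-m) * y ^ k
      ≤ ∫ y in Ioo (0 : ℝ) 1, (1 - y) ^ (-s) * (1 - x * y) ^ (-m) * y ^ (s + m - 2) :=
        setIntegral_mono_of_nonneg (fun y hy ↦ mul_nonneg (hpos y hy).le (rpow_nonneg hy.1.le _))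
          (fun y hy ↦ mul_le_mul_of_nonneg_left
            (rpow_le_rpow_of_exponent_ge hy.1 hy.2.le (by linarith)) (hpos y hy).le)
          (integrableOn_one_sub_rpow_mul_one_sub_mul_rpow_mul_rpow habc hx hbeta)
    _ = _ := by
        rw [setIntegral_one_sub_rpow_mul_one_sub_mul_rpow_mul_rpow habc hx, hbeta_val,
          show -s + -m + 1 = 1 - s - m by ring]
        ring

theorem stmt_7 (s m k : ℝ) (hs : s < 1) (hms : 1 < m + s) (hk : -1 < k)
    (h1 : s + m < 2 + k) (h2 : s < 2 + k) :
    ∀ x : ℝ, 0 ≤ x → x < 1 →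
      ∫ y in (0:ℝ)..1, (1 - y) ^ (-s) * (1 - x * y) ^ (-m) * y ^ k
        ≤ (Real.Gamma (s + m - 1) * Real.Gamma (1 - s) / Real.Gamma m) *
            (1 - x) ^ (1 - s - m) :=
  stmt_7_general s m k hs hms h1
end

section
/- Let P(r,t) = (1-r²)/(1 - 2r cos t + r²) be the Poisson kernel, 0 < r < 1. Then the second derivative in t satisfies |∂²P/∂t²(r,t)| ≤ 16(1-r)t²/[(1-r)² + 4π^{-2}rt²]³ + 4(1-r)/[(1-r)² + 4π^{-2}rt²]² for 0 ≤ t ≤ π. -/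
/-!
Both derivatives of `P(r, ·)` are explicit; with `D = 1 - 2r cos t + r²` one gets
`∂²P/∂t² = (1 - r²)(8r² sin²t - 2r cos t · D) / D³`, whose numerator is at most
`16(1 - r)t² + 4(1 - r)D` in absolute value. Since
`D = (1 - r)² + 2r(1 - cos t) ≥ (1 - r)² + 4π⁻²rt²` by Jordan's inequality
`cos t ≤ 1 - 2t²/π²` on `[-π, π]`, dividing by `D³` gives the bound.
-/

open Real

noncomputable def polarPoissonKernel (r s : ℝ) : ℝ := (1 - r ^ 2) / (1 - 2 * r * cos s + r ^ 2)

namespace polarPoissonKernel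

variable {r : ℝ}

lemma denom_pos (hr : |r| < 1) (s : ℝ) : 0 < 1 - 2 * r * cos s + r ^ 2 := by
  have hrcos : r * cos s ≤ |r| :=
    calc r * cos s ≤ |r| * |cos s| := (le_abs_self _).trans (abs_mul _ _).le
      _ ≤ |r| := mul_le_of_le_one_right (abs_nonneg r) (abs_cos_le_one s)
  nlinarith [sq_abs r, pow_pos (sub_pos.mpr hr) 2]

lemma le_denom (hr : 0 ≤ r) {t : ℝ} (ht : |t| ≤ π) :
    (1 - r) ^ 2 + 4 * π⁻¹ ^ 2 * r * t ^ 2 ≤ 1 - 2 * r * cos t + r ^ 2 := by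
  have hcos : cos t ≤ 1 - 2 * π⁻¹ ^ 2 * t ^ 2 := by
    simpa only [inv_pow, div_eq_mul_inv] using cos_le_one_sub_mul_cos_sq ht
  nlinarith [mul_le_mul_of_nonneg_left hcos (by linarith : (0 : ℝ) ≤ 2 * r)]

lemma hasDerivAt_denom (s : ℝ) :
    HasDerivAt (fun u => 1 - 2 * r * cos u + r ^ 2) (2 * r * sin s) s := by
  simpa using (((hasDerivAt_cos s).const_mul (2 * r)).const_sub 1).add_const (r ^ 2)

lemma hasDerivAt (hr : |r| < 1) (s : ℝ) :
    HasDerivAt (polarPoissonKernel r)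
      (-((1 - r ^ 2) * (2 * r * sin s)) / (1 - 2 * r * cos s + r ^ 2) ^ 2) s :=
  ((hasDerivAt_const s (1 - r ^ 2)).div (hasDerivAt_denom s) (denom_pos hr s).ne').congr_deriv
    (by ring)

lemma hasDerivAt_deriv (hr : |r| < 1) (t : ℝ) :
    HasDerivAt (deriv (polarPoissonKernel r))
      ((1 - r ^ 2) * (8 * r ^ 2 * sin t ^ 2 - 2 * r * cos t * (1 - 2 * r * cos t + r ^ 2))
        / (1 - 2 * r * cos t + r ^ 2) ^ 3) t := by
  have hD := (denom_pos hr t).ne'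
  have hnum : HasDerivAt (fun s => -((1 - r ^ 2) * (2 * r * sin s)))
      (-((1 - r ^ 2) * (2 * r * cos t))) t :=
    (((hasDerivAt_sin t).const_mul (2 * r)).const_mul (1 - r ^ 2)).neg
  rw [funext fun s => (hasDerivAt hr s).deriv]
  exact (hnum.div ((hasDerivAt_denom t).pow 2) (pow_ne_zero 2 hD)).congr_deriv
    (by rw [Pi.pow_apply, div_eq_div_iff (pow_ne_zero 2 (pow_ne_zero 2 hD)) (pow_ne_zero 3 hD)]
        ring)

lemma abs_numerator_le (hr0 : 0 ≤ r) (hr1 : r ≤ 1) (t : ℝ) :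
    |(1 - r ^ 2) * (8 * r ^ 2 * sin t ^ 2 - 2 * r * cos t * (1 - 2 * r * cos t + r ^ 2))|
      ≤ 16 * (1 - r) * t ^ 2 + 4 * (1 - r) * (1 - 2 * r * cos t + r ^ 2) := by
  set D := 1 - 2 * r * cos t + r ^ 2
  have hD : 0 ≤ D := by nlinarith [cos_le_one t, sq_nonneg (1 - r)]
  have hinner :
      |8 * r ^ 2 * sin t ^ 2 - 2 * r * cos t * D| ≤ 8 * r ^ 2 * sin t ^ 2 + 2 * r * D := by
    have hrD : 0 ≤ 2 * r * D := by positivity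
    rw [abs_le]
    constructor <;> nlinarith [cos_le_one t, neg_one_le_cos t, sq_nonneg (r * sin t)]
  calc |(1 - r ^ 2) * (8 * r ^ 2 * sin t ^ 2 - 2 * r * cos t * D)|
      ≤ (1 - r ^ 2) * (8 * r ^ 2 * sin t ^ 2 + 2 * r * D) := by
        rw [abs_mul, abs_of_nonneg (by nlinarith)]
        exact mul_le_mul_of_nonneg_left hinner (by nlinarith)
    _ = (1 - r) * ((1 + r) * r ^ 2) * (8 * sin t ^ 2) + (1 - r) * ((1 + r) * r) * (2 * D) := by
        ring
    _ ≤ (1 - r) * 2 * (8 * t ^ 2) + (1 - r) * 2 * (2 * D) := by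
        gcongr (1 - r) * ?_ * (8 * ?_) + (1 - r) * ?_ * (2 * D)
        · nlinarith
        · exact sin_sq_le_sq
        · nlinarith
    _ = 16 * (1 - r) * t ^ 2 + 4 * (1 - r) * D := by ring

end polarPoissonKernel

lemma add_mul_div_pow_three_le {A B Q D : ℝ} (hA : 0 ≤ A) (hB : 0 ≤ B) (hQ : 0 < Q)
    (hQD : Q ≤ D) : (A + B * D) / D ^ 3 ≤ A / Q ^ 3 + B / Q ^ 2 := by
  have hD : 0 < D := hQ.trans_le hQD
  calc (A + B * D) / D ^ 3 = A / D ^ 3 + B / D ^ 2 := by field_simp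
    _ ≤ A / Q ^ 3 + B / Q ^ 2 := by gcongr

theorem stmt_13 (r : ℝ) (hr0 : 0 < r) (hr1 : r < 1) (t : ℝ)
    (ht0 : 0 ≤ t) (htπ : t ≤ Real.pi) :
    |deriv (deriv (fun s : ℝ =>
        (1 - r ^ 2) / (1 - 2 * r * Real.cos s + r ^ 2))) t|
      ≤ 16 * (1 - r) * t ^ 2 / ((1 - r) ^ 2 + 4 * Real.pi⁻¹ ^ 2 * r * t ^ 2) ^ 3
        + 4 * (1 - r) / ((1 - r) ^ 2 + 4 * Real.pi⁻¹ ^ 2 * r * t ^ 2) ^ 2 := by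
  have hr : |r| < 1 := abs_lt.mpr ⟨by linarith, hr1⟩
  have hD := polarPoissonKernel.denom_pos hr t
  change |deriv (deriv (polarPoissonKernel r)) t| ≤ _
  rw [(polarPoissonKernel.hasDerivAt_deriv hr t).deriv, abs_div, abs_of_pos (pow_pos hD 3)]
  calc _ ≤ (16 * (1 - r) * t ^ 2 + 4 * (1 - r) * (1 - 2 * r * cos t + r ^ 2))
        / (1 - 2 * r * cos t + r ^ 2) ^ 3 := by
        gcongr
        exact polarPoissonKernel.abs_numerator_le hr0.le hr1.le t
    _ ≤ _ := add_mul_div_pow_three_le (by positivity) (by linarith) (by positivity)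
        (polarPoissonKernel.le_denom hr0.le (abs_le.mpr ⟨by linarith [pi_pos], htπ⟩))
end

section
/- For 0 < r < 1 and 0 ≤ t ≤ π, the second t-derivative of the Poisson kernel satisfies |P_{tt}(r,t)| ≤ (1/4)(π⁶ + π⁴ r)(1-r) r^{-3} t^{-4}. -/
/-!
Write `D = 1 - 2 r cos t + r² = (1 - r)² + 2 r (1 - cos t)` for the denominator. Differentiating
twice gives `P_tt = 2 r (1 - r²) (4 r sin² t - D cos t) / D³`, and since `r sin² t ≤ D` the
numerator is at most `10 r (1 - r²) D` in absolute value, so `|P_tt| ≤ 10 r (1 - r²) / D²`.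
On `[-π, π]`, Jordan's inequality gives `1 - cos t = 2 sin² (t / 2) ≥ 2 t² / π²`, hence
`D ≥ 4 r t² / π²`, and the remaining comparison of constants only needs `r < 1` and `π² > 9`.
-/

open Real

namespace PoissonKernel

variable {r : ℝ}

lemma denom_eq (r s : ℝ) :
    1 - 2 * r * cos s + r ^ 2 = (1 - r) ^ 2 + 2 * r * (1 - cos s) := by
  ring

lemma denom_pos (hr : |r| < 1) (s : ℝ) : 0 < 1 - 2 * r * cos s + r ^ 2 := by
  have hrc : r * cos s ≤ |r| := by
    nlinarith [neg_abs_le r, le_abs_self r, neg_one_le_cos s, cos_le_one s]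
  nlinarith [sq_abs r]

lemma mul_sin_sq_le_denom (hr : 0 ≤ r) (s : ℝ) :
    r * sin s ^ 2 ≤ 1 - 2 * r * cos s + r ^ 2 := by
  have h : 1 - 2 * r * cos s + r ^ 2 - r * sin s ^ 2 = (1 - r) ^ 2 + r * (1 - cos s) ^ 2 := by
    rw [sin_sq]; ring
  nlinarith [sq_nonneg (1 - r), mul_nonneg hr (sq_nonneg (1 - cos s))]

lemma mul_sq_le_pi_sq_mul_denom (hr : 0 ≤ r) {t : ℝ} (ht : |t| ≤ π) :
    4 * r * t ^ 2 ≤ π ^ 2 * (1 - 2 * r * cos t + r ^ 2) := by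
  have hcos := cos_le_one_sub_mul_cos_sq ht
  have hπ : 0 < π ^ 2 := by positivity
  have : 2 / π ^ 2 * t ^ 2 * π ^ 2 = 2 * t ^ 2 := by field_simp
  rw [denom_eq]
  nlinarith [mul_le_mul_of_nonneg_left hcos (mul_nonneg hr hπ.le), sq_nonneg (1 - r)]

lemma hasDerivAt_denom (r s : ℝ) :
    HasDerivAt (fun s => 1 - 2 * r * cos s + r ^ 2) (2 * r * sin s) s := by
  simpa using (((hasDerivAt_cos s).const_mul (2 * r)).const_sub 1).add_const (r ^ 2)

lemma deriv_kernel (hr : |r| < 1) :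
    deriv (fun s => (1 - r ^ 2) / (1 - 2 * r * cos s + r ^ 2))
      = fun s => -(1 - r ^ 2) * (2 * r * sin s) / (1 - 2 * r * cos s + r ^ 2) ^ 2 := by
  funext s
  have h : HasDerivAt (fun s => (1 - r ^ 2) / (1 - 2 * r * cos s + r ^ 2)) _ s :=
    (hasDerivAt_const s (1 - r ^ 2)).div (hasDerivAt_denom r s) (denom_pos hr s).ne'
  rw [h.deriv]
  ring

lemma deriv_deriv_kernel (hr : |r| < 1) (t : ℝ) :
    deriv (deriv (fun s => (1 - r ^ 2) / (1 - 2 * r * cos s + r ^ 2))) t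
      = 2 * r * (1 - r ^ 2) * (4 * r * sin t ^ 2 - cos t * (1 - 2 * r * cos t + r ^ 2))
          / (1 - 2 * r * cos t + r ^ 2) ^ 3 := by
  have hD := (denom_pos hr t).ne'
  have hnum : HasDerivAt (fun s => -(1 - r ^ 2) * (2 * r * sin s))
      (-(1 - r ^ 2) * (2 * r * cos t)) t :=
    ((hasDerivAt_sin t).const_mul (2 * r)).const_mul _
  have h : HasDerivAt
      (fun s => -(1 - r ^ 2) * (2 * r * sin s) / (1 - 2 * r * cos s + r ^ 2) ^ 2) _ t :=
    hnum.div ((hasDerivAt_denom r t).pow 2) (pow_ne_zero 2 hD)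
  rw [deriv_kernel hr, h.deriv]
  generalize 1 - 2 * r * cos t + r ^ 2 = D at hD ⊢
  field_simp
  push_cast
  ring

lemma abs_deriv_deriv_kernel_le (hr0 : 0 ≤ r) (hr1 : r < 1) (t : ℝ) :
    |deriv (deriv (fun s => (1 - r ^ 2) / (1 - 2 * r * cos s + r ^ 2))) t|
      ≤ 10 * r * (1 - r ^ 2) / (1 - 2 * r * cos t + r ^ 2) ^ 2 := by
  have hr : |r| < 1 := by rwa [abs_of_nonneg hr0]
  set D := 1 - 2 * r * cos t + r ^ 2
  have hD : 0 < D := denom_pos hr t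
  have hsin := mul_sin_sq_le_denom hr0 t
  have hnum : |4 * r * sin t ^ 2 - cos t * D| ≤ 5 * D := by
    rw [abs_le]
    constructor <;> nlinarith [neg_one_le_cos t, cos_le_one t, sq_nonneg (sin t)]
  rw [deriv_deriv_kernel hr, abs_div, abs_mul, abs_of_nonneg (by nlinarith : 0 ≤ 2 * r * (1 - r ^ 2)),
    abs_of_pos (by positivity : 0 < D ^ 3), div_le_div_iff₀ (by positivity) (by positivity)]
  calc 2 * r * (1 - r ^ 2) * |4 * r * sin t ^ 2 - cos t * D| * D ^ 2
      ≤ 2 * r * (1 - r ^ 2) * (5 * D) * D ^ 2 := by gcongr; nlinarith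
    _ = 10 * r * (1 - r ^ 2) * D ^ 3 := by ring

end PoissonKernel

open PoissonKernel in
theorem stmt_14 (r : ℝ) (hr0 : 0 < r) (hr1 : r < 1) (t : ℝ)
    (ht0 : 0 < t) (htπ : t ≤ Real.pi) :
    |deriv (deriv (fun s : ℝ =>
        (1 - r ^ 2) / (1 - 2 * r * Real.cos s + r ^ 2))) t|
      ≤ (1 / 4) * (Real.pi ^ 6 + Real.pi ^ 4 * r) * (1 - r) / (r ^ 3 * t ^ 4) := by
  have hlow := mul_sq_le_pi_sq_mul_denom hr0.le (t := t) (by rwa [abs_of_pos ht0])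
  have hπ : 3 < π := pi_gt_three
  calc _ ≤ 10 * r * (1 - r ^ 2) / (1 - 2 * r * cos t + r ^ 2) ^ 2 :=
        abs_deriv_deriv_kernel_le hr0.le hr1 t
    _ ≤ 10 * r * (1 - r ^ 2) / (4 * r * t ^ 2 / π ^ 2) ^ 2 := by
        have : 0 ≤ 1 - r ^ 2 := by nlinarith
        gcongr
        rwa [div_le_iff₀' (by positivity)]
    _ = π ^ 4 * (1 - r) * (5 * (1 + r) * r ^ 2) / (8 * r ^ 3 * t ^ 4) := by
        field_simp
        ring
    _ ≤ π ^ 4 * (1 - r) * (2 * (π ^ 2 + r)) / (8 * r ^ 3 * t ^ 4) := by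
        gcongr π ^ 4 * (1 - r) * ?_ / _
        nlinarith
    _ = _ := by ring
end

section
/- Let 1 < p ≤ 2 and let f, g be elements of L^p(μ) for a measure μ. Then ‖(f+g)/2‖² + (p-1)‖(f-g)/2‖² ≤ (‖f‖² + ‖g‖²)/2, where ‖·‖ denotes the L^p norm. -/
/-!
Following Ball–Carlen–Lieb, write `f = x + y`, `g = x - y` and put `c = p / 2 ≤ 1`,
`u = ‖x‖²`, `v = (p - 1)‖y‖²`. For exponents `c ≤ 1` Minkowski's inequality reverses, so
`‖x‖ₚ² + (p - 1)‖y‖ₚ² = ‖u‖_c + ‖v‖_c ≤ ‖u + v‖_c`. Pointwise,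
`(|z|² + (p - 1)|w|²)^c ≤ (|z + w|^p + |z - w|^p) / 2`: for reals this is the calculus inequality
`((1 + r)^p + (1 - r)^p) / 2 ≥ 1 + c (p - 1) r² ≥ (1 + (p - 1) r²)^c`, and for vectors concavity
of `t ↦ t^c` reduces to the reals. Integrating, and bounding the `p`-mean of `‖x + y‖ₚ` and
`‖x - y‖ₚ` by their quadratic mean, gives the inequality.
-/

open MeasureTheory

open Real Set
open scoped ENNReal NNReal

lemma two_mul_mul_le_one_add_rpow_sub_one_sub_rpow {q s : ℝ} (hq0 : 0 < q) (hq1 : q ≤ 1)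
    (hs0 : 0 ≤ s) (hs1 : s ≤ 1) :
    2 * q * s ≤ (1 + s) ^ q - (1 - s) ^ q := by
  let φ t := (1 + t) ^ q - (1 - t) ^ q - 2 * q * t
  have hφ : ContinuousOn φ (Icc 0 1) := by
    have := Real.continuous_rpow_const hq0.le
    fun_prop
  have hφ' : ∀ t ∈ Ioo (0 : ℝ) 1,
      HasDerivAt φ (q * (1 + t) ^ (q - 1) + q * (1 - t) ^ (q - 1) - 2 * q) t := by
    rintro t ⟨ht0, ht1⟩
    have hplus := ((hasDerivAt_id' t).const_add 1).rpow_const (p := q) (Or.inl (by linarith))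
    have hminus := ((hasDerivAt_id' t).const_sub 1).rpow_const (p := q) (Or.inl (by linarith))
    exact ((hplus.sub hminus).sub ((hasDerivAt_id' t).const_mul (2 * q))).congr_deriv (by ring)
  have hφ'_nonneg : ∀ t ∈ Ioo (0 : ℝ) 1,
      0 ≤ q * (1 + t) ^ (q - 1) + q * (1 - t) ^ (q - 1) - 2 * q := by
    rintro t ⟨ht0, ht1⟩
    have hplus : 0 < (1 + t) ^ (q - 1) := by positivity
    have hminus : 0 < (1 - t) ^ (q - 1) := rpow_pos_of_pos (by linarith) _
    have hprod : 1 ≤ (1 + t) ^ (q - 1) * (1 - t) ^ (q - 1) := by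
      rw [← mul_rpow (by linarith) (by linarith)]
      exact one_le_rpow_of_pos_of_le_one_of_nonpos (by nlinarith) (by nlinarith) (by linarith)
    have hsum : 2 ≤ (1 + t) ^ (q - 1) + (1 - t) ^ (q - 1) := by
      nlinarith [sq_nonneg ((1 + t) ^ (q - 1) - (1 - t) ^ (q - 1))]
    nlinarith
  have mono := monotoneOn_of_hasDerivWithinAt_nonneg (convex_Icc 0 1) hφ
    (by simpa only [interior_Icc] using fun t ht => (hφ' t ht).hasDerivWithinAt)
    (by simpa only [interior_Icc] using hφ'_nonneg)
  have := mono (left_mem_Icc.2 zero_le_one) ⟨hs0, hs1⟩ hs0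
  norm_num [φ] at this
  linarith

lemma two_add_mul_sq_le_one_add_rpow_add_one_sub_rpow {p r : ℝ} (hp1 : 1 < p) (hp2 : p ≤ 2)
    (hr0 : 0 ≤ r) (hr1 : r ≤ 1) :
    2 + p * (p - 1) * r ^ 2 ≤ (1 + r) ^ p + (1 - r) ^ p := by
  let φ t := (1 + t) ^ p + (1 - t) ^ p - p * (p - 1) * t ^ 2
  have hφ : ContinuousOn φ (Icc 0 1) := by
    have := Real.continuous_rpow_const (by linarith : 0 ≤ p)
    fun_prop
  have hφ' : ∀ t ∈ Ioo (0 : ℝ) 1,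
      HasDerivAt φ (p * ((1 + t) ^ (p - 1) - (1 - t) ^ (p - 1) - 2 * (p - 1) * t)) t := by
    rintro t ⟨ht0, ht1⟩
    have hplus := ((hasDerivAt_id' t).const_add 1).rpow_const (p := p) (Or.inl (by linarith))
    have hminus := ((hasDerivAt_id' t).const_sub 1).rpow_const (p := p) (Or.inl (by linarith))
    exact ((hplus.add hminus).sub ((hasDerivAt_pow 2 t).const_mul (p * (p - 1)))).congr_deriv
      (by push_cast; ring)
  have hφ'_nonneg : ∀ t ∈ Ioo (0 : ℝ) 1,
      0 ≤ p * ((1 + t) ^ (p - 1) - (1 - t) ^ (p - 1) - 2 * (p - 1) * t) := fun t ht =>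
    mul_nonneg (by linarith) <| sub_nonneg.2 <|
      two_mul_mul_le_one_add_rpow_sub_one_sub_rpow (by linarith) (by linarith) ht.1.le ht.2.le
  have mono := monotoneOn_of_hasDerivWithinAt_nonneg (convex_Icc 0 1) hφ
    (by simpa only [interior_Icc] using fun t ht => (hφ' t ht).hasDerivWithinAt)
    (by simpa only [interior_Icc] using hφ'_nonneg)
  have := mono (left_mem_Icc.2 zero_le_one) ⟨hr0, hr1⟩ hr0
  norm_num [φ] at this
  linarith

lemma one_add_mul_sq_rpow_le {p r : ℝ} (hp1 : 1 < p) (hp2 : p ≤ 2) (hr0 : 0 ≤ r) (hr1 : r ≤ 1) :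
    (1 + (p - 1) * r ^ 2) ^ (p / 2) ≤ ((1 + r) ^ p + (1 - r) ^ p) / 2 := by
  have bernoulli : (1 + (p - 1) * r ^ 2) ^ (p / 2) ≤ 1 + p / 2 * ((p - 1) * r ^ 2) :=
    rpow_one_add_le_one_add_mul_self (by nlinarith) (by linarith) (by linarith)
  linarith [two_add_mul_sq_le_one_add_rpow_add_one_sub_rpow hp1 hp2 hr0 hr1]

lemma sq_rpow_div_two (x p : ℝ) : (x ^ 2) ^ (p / 2) = |x| ^ p := by
  rw [← sq_abs, ← rpow_natCast_mul (abs_nonneg x)]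
  norm_num [mul_div_cancel₀]

lemma sq_add_mul_sq_rpow_le_of_le {p a b : ℝ} (hp1 : 1 < p) (hp2 : p ≤ 2) (hb : 0 ≤ b)
    (hba : b ≤ a) :
    (a ^ 2 + (p - 1) * b ^ 2) ^ (p / 2) ≤ ((a + b) ^ p + (a - b) ^ p) / 2 := by
  obtain rfl | ha := (hb.trans hba).eq_or_lt
  · obtain rfl : b = 0 := le_antisymm hba hb
    simp [zero_rpow (by linarith : p ≠ 0), zero_rpow (by linarith : p / 2 ≠ 0)]
  have key := one_add_mul_sq_rpow_le hp1 hp2 (div_nonneg hb ha.le) ((div_le_one ha).2 hba)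
  calc (a ^ 2 + (p - 1) * b ^ 2) ^ (p / 2)
      = (a ^ 2) ^ (p / 2) * (1 + (p - 1) * (b / a) ^ 2) ^ (p / 2) := by
        rw [← mul_rpow (by positivity) (by nlinarith)]
        congr 1
        field_simp
    _ = a ^ p * (1 + (p - 1) * (b / a) ^ 2) ^ (p / 2) := by rw [sq_rpow_div_two, abs_of_pos ha]
    _ ≤ a ^ p * (((1 + b / a) ^ p + (1 - b / a) ^ p) / 2) := by gcongr
    _ = ((a + b) ^ p + (a - b) ^ p) / 2 := by
        have hplus : a * (1 + b / a) = a + b := by field_simp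
        have hminus : a * (1 - b / a) = a - b := by field_simp
        rw [mul_div_assoc', mul_add, ← mul_rpow ha.le (by positivity), hplus,
          ← mul_rpow ha.le (by rw [sub_nonneg, div_le_one ha]; exact hba), hminus]

lemma sq_add_mul_sq_rpow_le {p a b : ℝ} (hp1 : 1 < p) (hp2 : p ≤ 2) (ha : 0 ≤ a) (hb : 0 ≤ b) :
    (a ^ 2 + (p - 1) * b ^ 2) ^ (p / 2) ≤ ((a + b) ^ p + |a - b| ^ p) / 2 := by
  rcases le_total b a with hba | hab
  · rw [abs_of_nonneg (sub_nonneg.2 hba)]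
    exact sq_add_mul_sq_rpow_le_of_le hp1 hp2 hb hba
  · have hswap : a ^ 2 + (p - 1) * b ^ 2 ≤ b ^ 2 + (p - 1) * a ^ 2 := by
      nlinarith [mul_nonneg (sub_nonneg.2 (pow_le_pow_left₀ ha hab 2)) (by linarith : 0 ≤ 2 - p)]
    calc (a ^ 2 + (p - 1) * b ^ 2) ^ (p / 2) ≤ (b ^ 2 + (p - 1) * a ^ 2) ^ (p / 2) :=
          rpow_le_rpow (by positivity) hswap (by linarith)
      _ ≤ ((b + a) ^ p + (b - a) ^ p) / 2 := sq_add_mul_sq_rpow_le_of_le hp1 hp2 ha hab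
      _ = ((a + b) ^ p + |a - b| ^ p) / 2 := by
          rw [add_comm b a, abs_sub_comm, abs_of_nonneg (sub_nonneg.2 hab)]

lemma ConcaveOn.map_add_map_le_of_mem_segment {s : Set ℝ} {f : ℝ → ℝ} (hf : ConcaveOn ℝ s f)
    {x y z : ℝ} (hx : x ∈ s) (hy : y ∈ s) (hz : z ∈ segment ℝ x y) :
    f x + f y ≤ f z + f (x + y - z) := by
  obtain ⟨a, b, ha, hb, hab, rfl⟩ := hz
  have hmix : x + y - (a • x + b • y) = b • x + a • y := by
    simp only [smul_eq_mul]; linear_combination (x + y) * hab.symm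
  have h1 := hf.2 hx hy ha hb hab
  have h2 := hf.2 hx hy hb ha (by rw [add_comm, hab])
  rw [hmix]
  simp only [smul_eq_mul] at h1 h2 ⊢
  linear_combination h1 + h2 + (f x + f y) * hab.symm

-- `‖z + w‖²` and `‖z - w‖²` lie between `(‖z‖ - ‖w‖)²` and `(‖z‖ + ‖w‖)²` and have the same sum,
-- so by concavity of `t ↦ t ^ (p / 2)` the scalar case is the worst one.
lemma norm_sq_add_mul_norm_sq_rpow_le {E : Type*} [NormedAddCommGroup E] [InnerProductSpace ℝ E]
    {p : ℝ} (hp1 : 1 < p) (hp2 : p ≤ 2) (z w : E) :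
    (‖z‖ ^ 2 + (p - 1) * ‖w‖ ^ 2) ^ (p / 2) ≤ (‖z + w‖ ^ p + ‖z - w‖ ^ p) / 2 := by
  have hnorm_add : |‖z‖ - ‖w‖| ≤ ‖z + w‖ := by
    simpa using abs_norm_sub_norm_le z (-w)
  have hseg : ‖z + w‖ ^ 2 ∈ segment ℝ ((‖z‖ - ‖w‖) ^ 2) ((‖z‖ + ‖w‖) ^ 2) := by
    rw [segment_eq_Icc (by nlinarith [norm_nonneg z, norm_nonneg w])]
    exact ⟨by simpa only [sq_abs] using pow_le_pow_left₀ (abs_nonneg _) hnorm_add 2,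
      pow_le_pow_left₀ (norm_nonneg _) (norm_add_le z w) 2⟩
  have hpar : (‖z‖ - ‖w‖) ^ 2 + (‖z‖ + ‖w‖) ^ 2 - ‖z + w‖ ^ 2 = ‖z - w‖ ^ 2 := by
    linarith [parallelogram_law_with_norm ℝ z w]
  have hspread := (concaveOn_rpow (by linarith : 0 ≤ p / 2) (by linarith))
    |>.map_add_map_le_of_mem_segment (mem_Ici.2 (sq_nonneg _)) (mem_Ici.2 (sq_nonneg _)) hseg
  simp only [hpar, sq_rpow_div_two, abs_norm, abs_of_nonneg (by positivity : 0 ≤ ‖z‖ + ‖w‖)]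
    at hspread
  linarith [sq_add_mul_sq_rpow_le hp1 hp2 (norm_nonneg z) (norm_nonneg w)]

lemma Real.rpow_mul_rpow_add_rpow_mul_rpow_le {c s t u v : ℝ} (hc0 : 0 < c) (hc1 : c ≤ 1)
    (hs : 0 < s) (ht : 0 < t) (hu : 0 ≤ u) (hv : 0 ≤ v) :
    s ^ (1 - c) * u ^ c + t ^ (1 - c) * v ^ c ≤ (s + t) ^ (1 - c) * (u + v) ^ c := by
  have hst : 0 < s + t := by positivity
  have hperspective : ∀ r w : ℝ, 0 < r → 0 ≤ w → r ^ (1 - c) * w ^ c = r * (w / r) ^ c := by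
    intro r w hr hw
    rw [div_rpow hw hr.le, rpow_sub hr, rpow_one]
    ring
  have hconc := (concaveOn_rpow hc0.le hc1).2 (mem_Ici.2 (div_nonneg hu hs.le))
    (mem_Ici.2 (div_nonneg hv ht.le)) (div_nonneg hs.le hst.le) (div_nonneg ht.le hst.le)
    (by field_simp)
  simp only [smul_eq_mul] at hconc
  rw [hperspective s u hs hu, hperspective t v ht hv,
    hperspective (s + t) (u + v) hst (by positivity)]
  calc s * (u / s) ^ c + t * (v / t) ^ c
      = (s + t) * (s / (s + t) * (u / s) ^ c + t / (s + t) * (v / t) ^ c) := by field_simp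
    _ ≤ (s + t) * ((u + v) / (s + t)) ^ c := by
      gcongr
      convert hconc using 2
      field_simp

lemma ENNReal.rpow_mul_rpow_add_rpow_mul_rpow_le {c : ℝ} (hc0 : 0 < c) (hc1 : c ≤ 1)
    {s t : ℝ≥0∞} (hs0 : s ≠ 0) (hs : s ≠ ⊤) (ht0 : t ≠ 0) (ht : t ≠ ⊤) (u v : ℝ≥0∞) :
    s ^ (1 - c) * u ^ c + t ^ (1 - c) * v ^ c ≤ (s + t) ^ (1 - c) * (u + v) ^ c := by
  have hc : 0 ≤ 1 - c := by linarith
  rcases eq_or_ne (u + v) ⊤ with huv | huv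
  · have hst : (s + t) ^ (1 - c) ≠ 0 :=
      (ENNReal.rpow_pos (by simp [pos_iff_ne_zero, hs0]) (ENNReal.add_ne_top.2 ⟨hs, ht⟩)).ne'
    rw [huv, ENNReal.top_rpow_of_pos hc0, ENNReal.mul_top hst]
    exact le_top
  obtain ⟨hu, hv⟩ := ENNReal.add_ne_top.1 huv
  lift s to ℝ≥0 using hs
  lift t to ℝ≥0 using ht
  lift u to ℝ≥0 using hu
  lift v to ℝ≥0 using hv
  simp only [← ENNReal.coe_add, ← ENNReal.coe_rpow_of_nonneg _ hc,
    ← ENNReal.coe_rpow_of_nonneg _ hc0.le, ← ENNReal.coe_mul, ENNReal.coe_le_coe,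
    ← NNReal.coe_le_coe]
  push_cast
  exact Real.rpow_mul_rpow_add_rpow_mul_rpow_le hc0 hc1 (by simpa [pos_iff_ne_zero] using hs0)
    (by simpa [pos_iff_ne_zero] using ht0) u.2 v.2

lemma eLpNorm'_rpow_eq_lintegral {X : Type*} [MeasurableSpace X] {μ : Measure X}
    {c : ℝ} (hc : c ≠ 0) (f : X → ℝ≥0∞) :
    eLpNorm' f c μ ^ c = ∫⁻ a, f a ^ c ∂μ := by
  rw [eLpNorm'_eq_lintegral_enorm, ← ENNReal.rpow_mul, one_div_mul_cancel hc, ENNReal.rpow_one]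
  simp only [enorm_eq_self]

-- Hölder's inequality with the weights `A = ‖u‖_c` and `B = ‖v‖_c`, for which it is an equality
-- on the left-hand side.
theorem eLpNorm'_add_eLpNorm'_le_eLpNorm'_add {X : Type*} [MeasurableSpace X] {μ : Measure X}
    {u v : X → ℝ≥0∞} (hu : AEMeasurable u μ) {c : ℝ} (hc0 : 0 < c) (hc1 : c ≤ 1) :
    eLpNorm' u c μ + eLpNorm' v c μ ≤ eLpNorm' (u + v) c μ := by
  have hu_le : eLpNorm' u c μ ≤ eLpNorm' (u + v) c μ :=
    eLpNorm'_mono_enorm_ae hc0.le (ae_of_all _ fun a => by simp)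
  have hv_le : eLpNorm' v c μ ≤ eLpNorm' (u + v) c μ :=
    eLpNorm'_mono_enorm_ae hc0.le (ae_of_all _ fun a => by simp)
  set A := eLpNorm' u c μ
  set B := eLpNorm' v c μ
  set W := eLpNorm' (u + v) c μ
  rcases eq_or_ne A 0 with hA0 | hA0
  · rwa [hA0, zero_add]
  rcases eq_or_ne B 0 with hB0 | hB0
  · rwa [hB0, add_zero]
  rcases eq_or_ne A ⊤ with hAt | hAt
  · rw [hAt] at hu_le ⊢; rw [top_le_iff.1 hu_le]; exact le_top
  rcases eq_or_ne B ⊤ with hBt | hBt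
  · rw [hBt] at hv_le ⊢; rw [top_le_iff.1 hv_le]; exact le_top
  have hc : 0 ≤ 1 - c := by linarith
  have hAB0 : A + B ≠ 0 := by simp [hA0]
  have hABt : A + B ≠ ⊤ := ENNReal.add_ne_top.2 ⟨hAt, hBt⟩
  have hint : A + B ≤ (A + B) ^ (1 - c) * W ^ c :=
    calc A + B = A ^ (1 - c) * ∫⁻ a, u a ^ c ∂μ + B ^ (1 - c) * ∫⁻ a, v a ^ c ∂μ := by
          rw [← eLpNorm'_rpow_eq_lintegral hc0.ne', ← eLpNorm'_rpow_eq_lintegral hc0.ne',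
            ← ENNReal.rpow_add _ _ hA0 hAt, ← ENNReal.rpow_add _ _ hB0 hBt, sub_add_cancel,
            ENNReal.rpow_one, ENNReal.rpow_one]
      _ = ∫⁻ a, A ^ (1 - c) * u a ^ c + B ^ (1 - c) * v a ^ c ∂μ := by
          rw [lintegral_add_left' ((hu.pow_const c).const_mul _),
            lintegral_const_mul' _ _ (ENNReal.rpow_ne_top_of_nonneg hc hAt),
            lintegral_const_mul' _ _ (ENNReal.rpow_ne_top_of_nonneg hc hBt)]
      _ ≤ ∫⁻ a, (A + B) ^ (1 - c) * (u a + v a) ^ c ∂μ := lintegral_mono fun a =>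
          ENNReal.rpow_mul_rpow_add_rpow_mul_rpow_le hc0 hc1 hA0 hAt hB0 hBt (u a) (v a)
      _ = (A + B) ^ (1 - c) * W ^ c := by
          rw [lintegral_const_mul' _ _ (ENNReal.rpow_ne_top_of_nonneg hc hABt),
            eLpNorm'_rpow_eq_lintegral hc0.ne']
          rfl
  rwa [← ENNReal.rpow_le_rpow_iff hc0, ← ENNReal.mul_le_mul_iff_right
    (ENNReal.rpow_pos (pos_iff_ne_zero.2 hAB0) hABt).ne' (ENNReal.rpow_ne_top_of_nonneg hc hABt),
    ← ENNReal.rpow_add _ _ hAB0 hABt, sub_add_cancel, ENNReal.rpow_one]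

lemma enorm_sq_add_mul_enorm_sq_rpow_le {E : Type*} [NormedAddCommGroup E]
    [InnerProductSpace ℝ E] {p : ℝ} (hp1 : 1 < p) (hp2 : p ≤ 2) (z w : E) :
    (‖z‖ₑ ^ (2 : ℝ) + ENNReal.ofReal (p - 1) * ‖w‖ₑ ^ (2 : ℝ)) ^ (p / 2)
      ≤ (‖z + w‖ₑ ^ p + ‖z - w‖ₑ ^ p) / 2 := by
  have h := ENNReal.ofReal_le_ofReal (norm_sq_add_mul_norm_sq_rpow_le hp1 hp2 z w)
  simp only [← ofReal_norm]
  convert h using 1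
  · rw [ENNReal.ofReal_rpow_of_nonneg (norm_nonneg z) two_pos.le,
      ENNReal.ofReal_rpow_of_nonneg (norm_nonneg w) two_pos.le, ← ENNReal.ofReal_mul (by linarith),
      ← ENNReal.ofReal_add (by positivity) (by positivity),
      ENNReal.ofReal_rpow_of_nonneg (by positivity) (by positivity), rpow_two, rpow_two]
  · rw [ENNReal.ofReal_div_of_pos two_pos, ENNReal.ofReal_ofNat,
      ENNReal.ofReal_add (by positivity) (by positivity),
      ENNReal.ofReal_rpow_of_nonneg (norm_nonneg _) (by positivity),
      ENNReal.ofReal_rpow_of_nonneg (norm_nonneg _) (by positivity)]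

lemma eLpNorm'_const_mul_of_ne_top {X : Type*} [MeasurableSpace X] {μ : Measure X}
    {f : X → ℝ≥0∞} {k : ℝ≥0∞} (hk : k ≠ ⊤) {q : ℝ} (hq : 0 < q) :
    eLpNorm' (fun a => k * f a) q μ = k * eLpNorm' f q μ := by
  simp only [eLpNorm'_eq_lintegral_enorm, enorm_eq_self]
  simp_rw [ENNReal.mul_rpow_of_nonneg _ _ hq.le]
  rw [lintegral_const_mul' _ _ (ENNReal.rpow_ne_top_of_nonneg hq.le hk),
    ENNReal.mul_rpow_of_nonneg _ _ (by positivity), ← ENNReal.rpow_mul, mul_one_div_cancel hq.ne',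
    ENNReal.rpow_one]

lemma eLpNorm'_sq_eq_lintegral_rpow {X E : Type*} [MeasurableSpace X] {μ : Measure X}
    [NormedAddCommGroup E] {p : ℝ} (f : X → E) :
    eLpNorm' f p μ ^ 2 = (∫⁻ a, ‖f a‖ₑ ^ p ∂μ) ^ (2 / p) := by
  rw [eLpNorm'_eq_lintegral_enorm, ← ENNReal.rpow_natCast, ← ENNReal.rpow_mul]
  ring_nf

theorem eLpNorm'_sq_add_mul_eLpNorm'_sq_le {X E : Type*} [MeasurableSpace X] {μ : Measure X}
    [NormedAddCommGroup E] [InnerProductSpace ℝ E] {p : ℝ} (hp1 : 1 < p) (hp2 : p ≤ 2)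
    {x y : X → E} (hx : AEStronglyMeasurable x μ) (hy : AEStronglyMeasurable y μ) :
    eLpNorm' x p μ ^ 2 + ENNReal.ofReal (p - 1) * eLpNorm' y p μ ^ 2
      ≤ (eLpNorm' (x + y) p μ ^ 2 + eLpNorm' (x - y) p μ ^ 2) / 2 := by
  have hc0 : 0 < p / 2 := by linarith
  have hsq : ∀ f : X → E, eLpNorm' (‖f ·‖ₑ ^ (2 : ℝ)) (p / 2) μ = eLpNorm' f p μ ^ 2 := fun f => by
    rw [eLpNorm'_enorm_rpow f _ _ two_pos, div_mul_cancel₀ _ two_ne_zero, ENNReal.rpow_two]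
  set u : X → ℝ≥0∞ := fun a => ‖x a‖ₑ ^ (2 : ℝ)
  set v : X → ℝ≥0∞ := fun a => ENNReal.ofReal (p - 1) * ‖y a‖ₑ ^ (2 : ℝ)
  set F := ∫⁻ a, ‖(x + y) a‖ₑ ^ p ∂μ
  set G := ∫⁻ a, ‖(x - y) a‖ₑ ^ p ∂μ
  calc eLpNorm' x p μ ^ 2 + ENNReal.ofReal (p - 1) * eLpNorm' y p μ ^ 2
      = eLpNorm' u (p / 2) μ + eLpNorm' v (p / 2) μ := by
        rw [eLpNorm'_const_mul_of_ne_top ENNReal.ofReal_ne_top hc0, hsq, hsq]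
    _ ≤ eLpNorm' (u + v) (p / 2) μ :=
        eLpNorm'_add_eLpNorm'_le_eLpNorm'_add (hx.enorm.pow_const _) hc0 (by linarith)
    _ = (∫⁻ a, (u a + v a) ^ (p / 2) ∂μ) ^ (2 / p) := by
        simp only [eLpNorm'_eq_lintegral_enorm, enorm_eq_self, one_div_div, Pi.add_apply]
    _ ≤ (2⁻¹ * F + 2⁻¹ * G) ^ (2 / p) := by
        rw [← lintegral_const_mul' _ _ (by simp), ← lintegral_const_mul' _ _ (by simp),
          ← lintegral_add_left' (((hx.add hy).enorm.pow_const p).const_mul _)]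
        gcongr with a
        rw [← mul_add, ← ENNReal.div_eq_inv_mul]
        exact enorm_sq_add_mul_enorm_sq_rpow_le hp1 hp2 (x a) (y a)
    _ ≤ 2⁻¹ * F ^ (2 / p) + 2⁻¹ * G ^ (2 / p) :=
        ENNReal.rpow_arith_mean_le_arith_mean2_rpow _ _ _ _ ENNReal.inv_two_add_inv_two
          (by rw [le_div_iff₀ (by linarith)]; linarith)
    _ = (eLpNorm' (x + y) p μ ^ 2 + eLpNorm' (x - y) p μ ^ 2) / 2 := by
        rw [eLpNorm'_sq_eq_lintegral_rpow, eLpNorm'_sq_eq_lintegral_rpow, ← mul_add,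
          ENNReal.div_eq_inv_mul]

lemma Lp.eLpNorm'_eq_ofReal_norm {X E : Type*} [MeasurableSpace X] {μ : Measure X}
    [NormedAddCommGroup E] {p : ℝ} (hp : 0 < p) (h : Lp E (ENNReal.ofReal p) μ) :
    eLpNorm' h p μ = ENNReal.ofReal ‖h‖ := by
  rw [Lp.norm_def, ENNReal.ofReal_toReal (Lp.eLpNorm_ne_top h),
    eLpNorm_eq_eLpNorm' (by simpa using hp) ENNReal.ofReal_ne_top, ENNReal.toReal_ofReal hp.le]

theorem Lp.norm_sq_add_mul_norm_sq_le {X E : Type*} [MeasurableSpace X] {μ : Measure X}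
    [NormedAddCommGroup E] [InnerProductSpace ℝ E] {p : ℝ} (hp1 : 1 < p) (hp2 : p ≤ 2)
    (x y : Lp E (ENNReal.ofReal p) μ) :
    ‖x‖ ^ 2 + (p - 1) * ‖y‖ ^ 2 ≤ (‖x + y‖ ^ 2 + ‖x - y‖ ^ 2) / 2 := by
  have : Fact (1 ≤ ENNReal.ofReal p) := ⟨ENNReal.one_le_ofReal.2 hp1.le⟩
  have key := eLpNorm'_sq_add_mul_eLpNorm'_sq_le hp1 hp2 (Lp.aestronglyMeasurable x)
    (Lp.aestronglyMeasurable y)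
  rw [eLpNorm'_congr_ae (Lp.coeFn_add x y).symm, eLpNorm'_congr_ae (Lp.coeFn_sub x y).symm]
    at key
  simp only [Lp.eLpNorm'_eq_ofReal_norm (by linarith : 0 < p),
    ← ENNReal.ofReal_pow (norm_nonneg _)] at key
  rw [← ENNReal.ofReal_mul (by linarith), ← ENNReal.ofReal_add (by positivity) (by positivity),
    ← ENNReal.ofReal_add (by positivity) (by positivity)] at key
  rwa [← ENNReal.ofReal_le_ofReal_iff (by positivity), ENNReal.ofReal_div_of_pos two_pos,
    ENNReal.ofReal_ofNat]

theorem stmt_18 {X : Type*} [MeasurableSpace X] (μ : Measure X)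
    (p : ℝ) (hp1 : 1 < p) (hp2 : p ≤ 2)
    (f g : Lp ℂ (ENNReal.ofReal p) μ) :
    ‖(2 : ℝ)⁻¹ • (f + g)‖ ^ 2 + (p - 1) * ‖(2 : ℝ)⁻¹ • (f - g)‖ ^ 2
      ≤ (‖f‖ ^ 2 + ‖g‖ ^ 2) / 2 := by
  have h := Lp.norm_sq_add_mul_norm_sq_le hp1 hp2 ((2 : ℝ)⁻¹ • (f + g)) ((2 : ℝ)⁻¹ • (f - g))
  rwa [show (2 : ℝ)⁻¹ • (f + g) + (2 : ℝ)⁻¹ • (f - g) = f by module,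
    show (2 : ℝ)⁻¹ • (f + g) - (2 : ℝ)⁻¹ • (f - g) = g by module] at h
end
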